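/- Let m ≥ 1 be an integer, 0 < q < 1, |ξ| < π/2 and 0 ≤ γ < 1. If q m sec ξ / (1-q)^{m+1} ≤ 1 - γ, then the integral operator 𝒢_q^m(z) = ∫_0^z Θ_q^m(t)/t dt belongs to the class 𝒦(ξ, γ). -/

import Mathlib

noncomputable section

open Complex Real Set

/-- The open unit disk in the complex plane. -/
def unitDisk : Set ℂ := Metric.ball 0 1

/-- The class 𝒜 of normalized analytic functions on the unit disk:
`f` analytic on `𝔻`, `f 0 = 0`, `f' 0 = 1`. -/
def NormalizedAnalytic (f : ℂ → ℂ) : Prop :=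
  AnalyticOn ℂ f unitDisk ∧ f 0 = 0 ∧ deriv f 0 = 1

/-- The spirallike class `𝒮(ξ, γ, ρ)`. -/
def SpiralS (ξ γ ρ : ℝ) (f : ℂ → ℂ) : Prop :=
  NormalizedAnalytic f ∧ Set.InjOn f unitDisk ∧
    ∀ z ∈ unitDisk, z ≠ 0 →
      (1 - (ρ : ℂ)) * f z + (ρ : ℂ) * z * deriv f z ≠ 0 ∧
      γ * Real.cos ξ <
        (Complex.exp (Complex.I * ξ) * (z * deriv f z) /
          ((1 - (ρ : ℂ)) * f z + (ρ : ℂ) * z * deriv f z)).re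

/-- The convex spirallike class `𝒦(ξ, γ, ρ)`. -/
def SpiralK (ξ γ ρ : ℝ) (f : ℂ → ℂ) : Prop :=
  NormalizedAnalytic f ∧ Set.InjOn f unitDisk ∧
    ∀ z ∈ unitDisk,
      deriv f z + (ρ : ℂ) * z * deriv (deriv f) z ≠ 0 ∧
      γ * Real.cos ξ <
        (Complex.exp (Complex.I * ξ) * (z * deriv (deriv f) z + deriv f z) /
          (deriv f z + (ρ : ℂ) * z * deriv (deriv f) z)).re

/-- The spirallike class `𝒮(ξ, γ)`. -/
def SpiralS0 (ξ γ : ℝ) (f : ℂ → ℂ) : Prop :=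
  NormalizedAnalytic f ∧ Set.InjOn f unitDisk ∧
    ∀ z ∈ unitDisk, z ≠ 0 →
      f z ≠ 0 ∧
      γ * Real.cos ξ <
        (Complex.exp (Complex.I * ξ) * (z * deriv f z) / f z).re

/-- The convex spirallike class `𝒦(ξ, γ)`. -/
def SpiralK0 (ξ γ : ℝ) (f : ℂ → ℂ) : Prop :=
  NormalizedAnalytic f ∧ Set.InjOn f unitDisk ∧
    ∀ z ∈ unitDisk,
      deriv f z ≠ 0 ∧
      γ * Real.cos ξ <
        (Complex.exp (Complex.I * ξ) *
          (1 + z * deriv (deriv f) z / deriv f z)).re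

/-- The class `ℛ^τ(ϑ, δ)`. -/
def ClassR (τ : ℂ) (ϑ δ : ℝ) (f : ℂ → ℂ) : Prop :=
  NormalizedAnalytic f ∧ Set.InjOn f unitDisk ∧
    ∀ z ∈ unitDisk,
      ‖(((1 - (ϑ : ℂ)) * (if z = 0 then 1 else f z / z) + (ϑ : ℂ) * deriv f z - 1) /
          (2 * τ * (1 - (δ : ℂ)) +
            (1 - (ϑ : ℂ)) * (if z = 0 then 1 else f z / z) + (ϑ : ℂ) * deriv f z - 1))‖ < 1

/-- The Pascal distribution series
`Θ_q^m(z) = z + ∑_{n=2}^∞ C(n+m-2, m-1) q^(n-1) (1-q)^m z^n`. -/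
def pascalTheta (m : ℕ) (q : ℝ) : ℂ → ℂ := fun z =>
  z + ∑' n : ℕ, ((n + m).choose (m - 1) : ℂ) * (q : ℂ) ^ (n + 1) * (1 - (q : ℂ)) ^ m * z ^ (n + 2)

/-- The integral operator `𝒢_q^m(z) = ∫_0^z Θ_q^m(t)/t dt
= z + ∑_{n=2}^∞ C(n+m-2, m-1) q^(n-1) (1-q)^m z^n / n`. -/
def pascalG (m : ℕ) (q : ℝ) : ℂ → ℂ := fun z =>
  z + ∑' n : ℕ, ((n + m).choose (m - 1) : ℂ) * (q : ℂ) ^ (n + 1) * (1 - (q : ℂ)) ^ m *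
    z ^ (n + 2) / ((n : ℂ) + 2)

/-!
Write `𝒢_q^m' = 1 + ∑ dₙ z^(n+1)` with `dₙ ≥ 0` the Pascal probabilities, so that
`∑ dₙ = 1 - (1-q)^m` and `∑ (n+1) dₙ = m q / (1-q)` (the mean of the distribution).
On the unit disk this gives `Re 𝒢' ≥ (1-q)^m > 0`, whence univalence (Noshiro–Warschawski),
and `|z 𝒢''/𝒢'| < m q / (1-q)^(m+1) ≤ (1-γ) cos ξ`, whence
`Re (e^{iξ} (1 + z 𝒢''/𝒢')) ≥ cos ξ - |z 𝒢''/𝒢'| > γ cos ξ`.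
-/
open scoped Topology

theorem Convex.injOn_of_hasDerivAt_re_pos {s : Set ℂ} (hs : Convex ℝ s) {f f' : ℂ → ℂ}
    (hf : ∀ z ∈ s, HasDerivAt f (f' z) z) (hpos : ∀ z ∈ s, 0 < (f' z).re) : InjOn f s := by
  intro a ha b hb hab
  by_contra hne
  have hba : b - a ≠ 0 := sub_ne_zero.2 (Ne.symm hne)
  set L : ℝ → ℂ := fun t => a + t * (b - a)
  have hL : ∀ t ∈ Icc (0 : ℝ) 1, L t ∈ s := fun t ht => by
    convert hs.lineMap_mem ha hb ht using 1
    simp [L, AffineMap.lineMap_apply_module', Complex.real_smul, add_comm]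
  -- `t ↦ Re (f (L t) / (b - a))` has derivative `Re f' (L t) > 0`, yet equal values at `0`, `1`.
  have hφ : ∀ t ∈ Icc (0 : ℝ) 1,
      HasDerivAt (fun t : ℝ => (f (L t) / (b - a)).re) (f' (L t)).re t := fun t ht => by
    have hline : HasDerivAt (fun w : ℂ => a + w * (b - a)) (b - a) (t : ℂ) := by
      simpa using ((hasDerivAt_id (t : ℂ)).mul_const (b - a)).const_add a
    have h := (((hf _ (hL t ht)).comp (t : ℂ) hline).comp_ofReal.div_const (b - a))
    rw [mul_div_cancel_right₀ _ hba] at h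
    exact Complex.reCLM.hasFDerivAt.comp_hasDerivAt t h
  obtain ⟨c, hc, hslope⟩ := exists_hasDerivAt_eq_slope (fun t : ℝ => (f (L t) / (b - a)).re)
    (fun t => (f' (L t)).re) zero_lt_one
    (fun t ht => (hφ t ht).continuousAt.continuousWithinAt)
    (fun t ht => hφ t (Ioo_subset_Icc_self ht))
  have hL0 : L 0 = a := by simp [L]
  have hL1 : L 1 = b := by simp [L]
  rw [hL0, hL1, hab, sub_self, zero_div] at hslope
  exact (hpos _ (hL c (Ioo_subset_Icc_self hc))).ne' hslope

theorem hasDerivAt_tsum_mul_pow {c : ℕ → ℂ} (k : ℕ)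
    (hc : Summable fun n => ((n + k + 1 : ℕ) : ℝ) * ‖c n‖) {z : ℂ} (hz : ‖z‖ < 1) :
    HasDerivAt (fun w => ∑' n, c n * w ^ (n + k + 1))
      (∑' n, ((n + k + 1 : ℕ) : ℂ) * c n * z ^ (n + k)) z := by
  refine hasDerivAt_tsum_of_isPreconnected (g := fun n w => c n * w ^ (n + k + 1))
    (g' := fun n w => ((n + k + 1 : ℕ) : ℂ) * c n * w ^ (n + k)) hc
    Metric.isOpen_ball
    (convex_ball (0 : ℂ) 1).isPreconnected (fun n y _ => ?_) (fun n y hy => ?_)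
    (Metric.mem_ball_self one_pos) ?_ (mem_ball_zero_iff.2 hz)
  · simpa [mul_comm, mul_assoc, mul_left_comm] using
      (hasDerivAt_pow (n + k + 1) y).const_mul (c n)
  · rw [norm_mul, norm_mul, norm_pow, Complex.norm_natCast]
    exact mul_le_of_le_one_right (by positivity)
      (pow_le_one₀ (norm_nonneg y) (mem_ball_zero_iff.1 hy).le)
  · simp

theorem norm_tsum_mul_pow_le {c : ℕ → ℂ} {s : ℝ} (hs : HasSum (fun n => ‖c n‖) s) (e : ℕ → ℕ)
    {z : ℂ} (hz : ‖z‖ ≤ 1) : ‖∑' n, c n * z ^ e n‖ ≤ s :=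
  tsum_of_norm_bounded hs fun n => by
    rw [norm_mul, norm_pow]
    exact mul_le_of_le_one_right (norm_nonneg _) (pow_le_one₀ (norm_nonneg z) hz)

theorem lt_re_exp_mul_I_mul_one_add {ξ γ : ℝ} {w : ℂ} (hw : ‖w‖ < (1 - γ) * Real.cos ξ) :
    γ * Real.cos ξ < (exp (I * ξ) * (1 + w)).re := by
  have hre : (exp (I * ξ)).re = Real.cos ξ := by
    rw [mul_comm]
    exact exp_ofReal_mul_I_re ξ
  have hnorm : -‖w‖ ≤ (exp (I * ξ) * w).re := by
    simpa [norm_exp_ofReal_mul_I, mul_comm I] using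
      neg_le_of_abs_le (abs_re_le_norm (exp (I * ξ) * w))
  rw [mul_add, mul_one, add_re, hre]
  linarith

-- The coefficient of `z ^ (n + 2)` in `Θ_q^m`, i.e. the Pascal probability `P(X = n + 1)`.
def pascalCoeff (m : ℕ) (q : ℝ) (n : ℕ) : ℝ :=
  ((n + m).choose (m - 1) : ℝ) * q ^ (n + 1) * (1 - q) ^ m

def pascalGDeriv (m : ℕ) (q : ℝ) (z : ℂ) : ℂ :=
  1 + ∑' n, (pascalCoeff m q n : ℂ) * z ^ (n + 1)

def pascalGDeriv2 (m : ℕ) (q : ℝ) (z : ℂ) : ℂ :=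
  ∑' n, ((n + 1 : ℕ) : ℂ) * pascalCoeff m q n * z ^ n

section Pascal

variable {m : ℕ} {q : ℝ}

theorem pascalCoeff_nonneg (hq0 : 0 ≤ q) (hq1 : q ≤ 1) (n : ℕ) : 0 ≤ pascalCoeff m q n := by
  have : 0 ≤ 1 - q := sub_nonneg.2 hq1
  unfold pascalCoeff
  positivity

theorem hasSum_pascalCoeff (hm : 1 ≤ m) (hq0 : 0 ≤ q) (hq1 : q < 1) :
    HasSum (pascalCoeff m q) (1 - (1 - q) ^ m) := by
  obtain ⟨k, rfl⟩ := Nat.exists_eq_add_of_le' hm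
  have hq : ‖q‖ < 1 := by rwa [Real.norm_of_nonneg hq0]
  have hne : (1 - q) ^ (k + 1) ≠ 0 := pow_ne_zero _ (sub_ne_zero.2 hq1.ne')
  have hgeom := hasSum_choose_mul_geometric_of_norm_lt_one k hq
  rw [← hasSum_nat_add_iff' 1] at hgeom
  have h := hgeom.mul_left ((1 - q) ^ (k + 1))
  rw [Finset.sum_range_one, mul_sub, mul_one_div_cancel hne] at h
  simp only [zero_add, Nat.choose_self, Nat.cast_one, pow_zero, mul_one] at h
  refine h.congr_fun fun n => ?_
  simp only [pascalCoeff, Nat.add_sub_cancel, ← add_assoc, add_right_comm n 1 k]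
  ring

theorem hasSum_succ_mul_pascalCoeff (hm : 1 ≤ m) (hq0 : 0 ≤ q) (hq1 : q < 1) :
    HasSum (fun n => ((n + 1 : ℕ) : ℝ) * pascalCoeff m q n) (m * q / (1 - q)) := by
  obtain ⟨k, rfl⟩ := Nat.exists_eq_add_of_le' hm
  have hq : ‖q‖ < 1 := by rwa [Real.norm_of_nonneg hq0]
  have hne : 1 - q ≠ 0 := sub_ne_zero.2 hq1.ne'
  have h := (hasSum_choose_mul_geometric_of_norm_lt_one (k + 1) hq).mul_left
    (((k + 1 : ℕ) : ℝ) * q * (1 - q) ^ (k + 1))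
  rw [show ((k + 1 : ℕ) : ℝ) * q * (1 - q) ^ (k + 1) * (1 / (1 - q) ^ (k + 1 + 1))
      = ((k + 1 : ℕ) : ℝ) * q / (1 - q) by field_simp; ring] at h
  refine h.congr_fun fun n => ?_
  have hchoose := Nat.choose_succ_right_eq (n + (k + 1)) k
  rw [show n + (k + 1) - k = n + 1 by omega] at hchoose
  have hcast : ((n + 1 : ℕ) : ℝ) * ((n + (k + 1)).choose k : ℕ)
      = ((k + 1 : ℕ) : ℝ) * ((n + (k + 1)).choose (k + 1) : ℕ) := by
    exact_mod_cast by linarith [hchoose]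
  simp only [pascalCoeff, Nat.add_sub_cancel]
  linear_combination (q ^ (n + 1) * (1 - q) ^ (k + 1)) * hcast

theorem pascalG_eq :
    pascalG m q =
      fun z => z + ∑' n, ((pascalCoeff m q n / (n + 2) : ℝ) : ℂ) * z ^ (n + 1 + 1) := by
  ext z
  simp only [pascalG, pascalCoeff]
  congr 1
  refine tsum_congr fun n => ?_
  push_cast
  ring

variable (hm : 1 ≤ m) (hq0 : 0 ≤ q) (hq1 : q < 1)
include hm hq0 hq1

theorem hasDerivAt_pascalG {z : ℂ} (hz : ‖z‖ < 1) :
    HasDerivAt (pascalG m q) (pascalGDeriv m q z) z := by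
  have hcoeff (n : ℕ) : ((n + 1 + 1 : ℕ) : ℝ) * ‖((pascalCoeff m q n / (n + 2) : ℝ) : ℂ)‖
      = pascalCoeff m q n := by
    have := pascalCoeff_nonneg (m := m) hq0 hq1.le n
    rw [Complex.norm_of_nonneg (by positivity)]
    push_cast
    field_simp
    ring
  have h := hasDerivAt_tsum_mul_pow (c := fun n => ((pascalCoeff m q n / (n + 2) : ℝ) : ℂ)) 1
    (by simpa only [hcoeff] using (hasSum_pascalCoeff hm hq0 hq1).summable) hz
  rw [pascalG_eq]
  refine ((hasDerivAt_id' z).add h).congr_deriv ?_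
  rw [pascalGDeriv]
  congr 1
  refine tsum_congr fun n => ?_
  have hn : (n : ℂ) + 2 ≠ 0 := by norm_cast
  push_cast
  field_simp
  ring

theorem hasDerivAt_pascalGDeriv {z : ℂ} (hz : ‖z‖ < 1) :
    HasDerivAt (pascalGDeriv m q) (pascalGDeriv2 m q z) z := by
  have hcoeff (n : ℕ) : ((n + 0 + 1 : ℕ) : ℝ) * ‖(pascalCoeff m q n : ℂ)‖
      = ((n + 1 : ℕ) : ℝ) * pascalCoeff m q n := by
    rw [Complex.norm_of_nonneg (pascalCoeff_nonneg hq0 hq1.le n), add_zero]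
  have h := hasDerivAt_tsum_mul_pow (c := fun n => (pascalCoeff m q n : ℂ)) 0
    (by simpa only [hcoeff] using (hasSum_succ_mul_pascalCoeff hm hq0 hq1).summable) hz
  exact h.const_add 1

theorem deriv_deriv_pascalG {z : ℂ} (hz : ‖z‖ < 1) :
    deriv (deriv (pascalG m q)) z = pascalGDeriv2 m q z := by
  have hderiv : deriv (pascalG m q) =ᶠ[𝓝 z] pascalGDeriv m q := by
    filter_upwards [Metric.isOpen_ball.mem_nhds (mem_ball_zero_iff.2 hz)] with w hw
    exact (hasDerivAt_pascalG hm hq0 hq1 (mem_ball_zero_iff.1 hw)).deriv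
  rw [hderiv.deriv_eq, (hasDerivAt_pascalGDeriv hm hq0 hq1 hz).deriv]

theorem pow_le_re_pascalGDeriv {z : ℂ} (hz : ‖z‖ ≤ 1) :
    (1 - q) ^ m ≤ (pascalGDeriv m q z).re := by
  have hnorm : HasSum (fun n => ‖(pascalCoeff m q n : ℂ)‖) (1 - (1 - q) ^ m) := by
    simpa only [Complex.norm_of_nonneg (pascalCoeff_nonneg hq0 hq1.le _)]
      using hasSum_pascalCoeff hm hq0 hq1
  have hbound := norm_tsum_mul_pow_le hnorm (· + 1) hz
  have hre := neg_le_of_abs_le (abs_re_le_norm (∑' n, (pascalCoeff m q n : ℂ) * z ^ (n + 1)))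
  rw [pascalGDeriv, add_re, one_re]
  linarith

theorem norm_pascalGDeriv2_le {z : ℂ} (hz : ‖z‖ ≤ 1) :
    ‖pascalGDeriv2 m q z‖ ≤ m * q / (1 - q) := by
  have hnorm : HasSum (fun n => ‖((n + 1 : ℕ) : ℂ) * pascalCoeff m q n‖) (m * q / (1 - q)) := by
    simpa only [norm_mul, Complex.norm_natCast,
      Complex.norm_of_nonneg (pascalCoeff_nonneg hq0 hq1.le _)]
      using hasSum_succ_mul_pascalCoeff hm hq0 hq1
  exact norm_tsum_mul_pow_le hnorm id hz

theorem pascalG_normalizedAnalytic : NormalizedAnalytic (pascalG m q) := by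
  refine ⟨DifferentiableOn.analyticOn (fun z hz => ?_) Metric.isOpen_ball,
    by simp [pascalG], ?_⟩
  · exact (hasDerivAt_pascalG hm hq0 hq1 (mem_ball_zero_iff.1 hz)).differentiableAt
      |>.differentiableWithinAt
  · rw [(hasDerivAt_pascalG hm hq0 hq1 (by simp)).deriv]
    simp [pascalGDeriv]

theorem pascalG_injOn : InjOn (pascalG m q) unitDisk :=
  (convex_ball 0 1).injOn_of_hasDerivAt_re_pos
    (fun _ hz => hasDerivAt_pascalG hm hq0 hq1 (mem_ball_zero_iff.1 hz))
    fun _ hz => (pow_pos (sub_pos.2 hq1) m).trans_le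
      (pow_le_re_pascalGDeriv hm hq0 hq1 (mem_ball_zero_iff.1 hz).le)

end Pascal

theorem norm_mul_pascalGDeriv2_div_lt {m : ℕ} (hm : 1 ≤ m) {q : ℝ} (hq0 : 0 < q) (hq1 : q < 1)
    {z : ℂ} (hz : ‖z‖ < 1) :
    ‖z * pascalGDeriv2 m q z / pascalGDeriv m q z‖ < m * q / (1 - q) ^ (m + 1) := by
  have h1q : 0 < 1 - q := sub_pos.2 hq1
  have hmq : 0 < m * q / (1 - q) := by
    have : (0 : ℝ) < m := by exact_mod_cast hm
    positivity
  have hre := pow_le_re_pascalGDeriv hm hq0.le hq1 hz.le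
  calc ‖z * pascalGDeriv2 m q z / pascalGDeriv m q z‖
      = ‖z‖ * ‖pascalGDeriv2 m q z‖ / ‖pascalGDeriv m q z‖ := by rw [norm_div, norm_mul]
    _ ≤ ‖z‖ * (m * q / (1 - q)) / (1 - q) ^ m := by
      gcongr
      · exact norm_pascalGDeriv2_le hm hq0.le hq1 hz.le
      · exact hre.trans (re_le_norm _)
    _ < m * q / (1 - q) / (1 - q) ^ m := by
      gcongr
      exact mul_lt_of_lt_one_left hmq hz
    _ = m * q / (1 - q) ^ (m + 1) := by
      rw [div_div, pow_succ, mul_comm (1 - q)]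

theorem stmt15_general (m : ℕ) (hm : 1 ≤ m) (q : ℝ) (hq0 : 0 < q) (hq1 : q < 1)
    (ξ γ : ℝ) (hξ : |ξ| < π / 2)
    (h : q * m * (Real.cos ξ)⁻¹ / (1 - q) ^ (m + 1) ≤ 1 - γ) :
    SpiralK0 ξ γ (pascalG m q) := by
  have hcos : 0 < Real.cos ξ := Real.cos_pos_of_mem_Ioo (abs_lt.1 hξ)
  have hbound : m * q / (1 - q) ^ (m + 1) ≤ (1 - γ) * Real.cos ξ := by
    rw [mul_div_right_comm, mul_comm q, ← div_eq_mul_inv, div_le_iff₀ hcos] at h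
    linarith
  refine ⟨pascalG_normalizedAnalytic hm hq0.le hq1, pascalG_injOn hm hq0.le hq1, fun z hz => ?_⟩
  have hz' : ‖z‖ < 1 := mem_ball_zero_iff.1 hz
  rw [(hasDerivAt_pascalG hm hq0.le hq1 hz').deriv, deriv_deriv_pascalG hm hq0.le hq1 hz']
  refine ⟨fun h0 => ?_, lt_re_exp_mul_I_mul_one_add
    ((norm_mul_pascalGDeriv2_div_lt hm hq0 hq1 hz').trans_le hbound)⟩
  have hre := pow_le_re_pascalGDeriv hm hq0.le hq1 hz'.le
  rw [h0, zero_re] at hre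
  exact (pow_pos (sub_pos.2 hq1) m).not_ge hre

/-- Corollary 5, `𝒢_q^m ∈ 𝒦(ξ, γ)`. -/
theorem stmt15 (m : ℕ) (hm : 1 ≤ m) (q : ℝ) (hq0 : 0 < q) (hq1 : q < 1)
    (ξ γ : ℝ) (hξ : |ξ| < π / 2) (hγ0 : 0 ≤ γ) (hγ1 : γ < 1)
    (h : q * m * (Real.cos ξ)⁻¹ / (1 - q) ^ (m + 1) ≤ 1 - γ) :
    SpiralK0 ξ γ (pascalG m q) :=
  stmt15_general m hm q hq0 hq1 ξ γ hξ h
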